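/- Let F be a non-archimedean local field of characteristic 2, let d ∈ F* and a, b ∈ F, and suppose the quadratic form ⟨d⟩ ⊥ [a,b] of rank 3 is anisotropic over F. Then the quaternion algebra {da, d⁻¹b / F} is a division algebra (it is not split). -/

import Mathlib

open scoped TensorProduct

noncomputable section

/-- Two quadratic forms are *isometric* if there is an isometry equivalence between them. -/
def QFIsometric {F V W : Type*} [Field F] [AddCommGroup V] [Module F V]
    [AddCommGroup W] [Module F W] (f : QuadraticForm F V) (g : QuadraticForm F W) : Prop :=
  Nonempty (QuadraticMap.IsometryEquiv f g)

/-- Two quadratic forms are *similar* if `f` is isometric to a nonzero scalar multiple of `g`. -/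
def QFSimilar {F V W : Type*} [Field F] [AddCommGroup V] [Module F V]
    [AddCommGroup W] [Module F W] (f : QuadraticForm F V) (g : QuadraticForm F W) : Prop :=
  ∃ a : F, a ≠ 0 ∧ QFIsometric f (a • g)

/-- A quadratic form (of even rank) is non-degenerate iff its polar bilinear form
is non-degenerate; for odd rank, the radical of the polar form is one-dimensional and
contains no nonzero vector on which `q` vanishes. -/
def QFNondegenerate {F V : Type*} [Field F] [AddCommGroup V] [Module F V]
    (q : QuadraticForm F V) : Prop :=
  (Even (Module.finrank F V) ∧ LinearMap.BilinForm.Nondegenerate q.polarBilin) ∨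
  (Odd (Module.finrank F V) ∧ Module.finrank F (LinearMap.ker q.polarBilin) = 1 ∧
    ∀ x ∈ LinearMap.ker q.polarBilin, q x = 0 → x = 0)

/-- The Witt index of a quadratic form: the largest dimension of a totally isotropic
subspace. -/
def wittIndex (F : Type*) {V : Type*} [Field F] [AddCommGroup V] [Module F V]
    (q : QuadraticForm F V) : ℕ :=
  sSup {m : ℕ | ∃ W : Submodule F V, Module.finrank F W = m ∧ ∀ x ∈ W, q x = 0}

/-- The binary quadratic form `[a,b]` of characteristic `2` theory:
`q(x) = a·x₀² + x₀x₁ + b·x₁²`, so `q(e₁) = a`, `q(e₂) = b` and the polar form has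
`b_q(e₁,e₂) = 1`. -/
def binQF (F : Type*) [Field F] (a b : F) : QuadraticForm F (Fin 2 → F) :=
  a • QuadraticMap.linMulLin (LinearMap.proj 0) (LinearMap.proj 0)
    + QuadraticMap.linMulLin (LinearMap.proj 0) (LinearMap.proj 1)
    + b • QuadraticMap.linMulLin (LinearMap.proj 1) (LinearMap.proj 1)

/-- The orthogonal sum `[a₁,b₁] ⊥ ⋯ ⊥ [a_m,b_m]`. -/
def binSumQF (F : Type*) [Field F] {m : ℕ} (a b : Fin m → F) :
    QuadraticForm F (Fin m → Fin 2 → F) :=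
  QuadraticMap.pi fun i => binQF F (a i) (b i)

/-- `c` lies in the image `℘F` of the Artin–Schreier map `℘(x) = x² + x`. -/
def InArtinSchreier (F : Type*) [Field F] (c : F) : Prop :=
  ∃ x : F, c = x ^ 2 + x

/-- `δ` represents the Arf invariant (discriminant) of the even-rank form `q`:
`q` is isometric to some `[a₁,b₁] ⊥ ⋯ ⊥ [a_m,b_m]` with `∑ aᵢbᵢ = δ`. -/
def HasArf {F V : Type*} [Field F] [AddCommGroup V] [Module F V]
    (q : QuadraticForm F V) (δ : F) : Prop :=
  ∃ (m : ℕ) (a b : Fin m → F), QFIsometric q (binSumQF F a b) ∧ ∑ i, a i * b i = δ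

/-- A finite-dimensional algebra over `K` is split if it is isomorphic to a matrix
algebra over `K`. -/
def IsSplitAlgebra (K A : Type*) [Field K] [Ring A] [Algebra K A] : Prop :=
  ∃ n : ℕ, 0 < n ∧ Nonempty (A ≃ₐ[K] Matrix (Fin n) (Fin n) K)

/-- The (Schur) index of the central simple `K`-algebra `A` equals `k` : `A` is a matrix
algebra over a division algebra `D` of degree `k` (i.e. `dim_K D = k²`). -/
def AlgIndexEq (K : Type*) (A : Type*) [Field K] [Ring A] [Algebra K A] (k : ℕ) : Prop :=
  ∃ (D : Type) (_ : DivisionRing D) (_ : Algebra K D) (n : ℕ), 0 < n ∧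
    Nonempty (A ≃ₐ[K] Matrix (Fin n) (Fin n) D) ∧ Module.finrank K D = k * k

/-- Two algebras are Brauer equivalent (have the same class in the Brauer group) if they
become isomorphic after tensoring by matrix algebras. -/
def BrauerEquiv (K A B : Type*) [Field K] [Ring A] [Algebra K A] [Ring B] [Algebra K B] :
    Prop :=
  ∃ n m : ℕ, 0 < n ∧ 0 < m ∧
    Nonempty (Matrix (Fin n) (Fin n) A ≃ₐ[K] Matrix (Fin m) (Fin m) B)

/-- Scalar extension of a quadratic form along a ring homomorphism `σ : K →+* L`, computed
with respect to a basis `b` of `V`: the resulting form on `Lⁿ` has Gram coefficients the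
images under `σ` of those of `q`. -/
def QFBaseChange {K L V : Type*} [Field K] [Field L] [AddCommGroup V] [Module K V]
    (σ : K →+* L) {n : ℕ} (b : Module.Basis (Fin n) K V) (q : QuadraticForm K V) :
    QuadraticForm L (Fin n → L) :=
  (∑ i, σ (q (b i)) • QuadraticMap.linMulLin (LinearMap.proj i) (LinearMap.proj i)) +
  ∑ i : Fin n, ∑ j : Fin n,
    (if (i : ℕ) < (j : ℕ) then σ (QuadraticMap.polar (⇑q) (b i) (b j)) else 0) •
      QuadraticMap.linMulLin (LinearMap.proj i) (LinearMap.proj j)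

end

/-! In characteristic `2` the Clifford algebra of `[A, B]` is the quaternion algebra `{A, B}`,
spanned by `1, i, j, ij`, and `x x̄ = N(x)` for the norm form `N = [1, AB] ⊥ [A, B]`. Rescaling
coordinates turns `⟨d⟩ ⊥ [a, b]` into a multiple of `⟨1⟩ ⊥ [da, d⁻¹b]`, which is the restriction of
`N` to the span of `1, i, j`. If `N(x) = 0`, then `y = c₂ + c₃ i` moves `x` into that span while
`N(yx) = N(y) N(x) = 0`, so anisotropy forces `x = 0`. Hence every nonzero quaternion is
invertible; a matrix algebra `Mₙ(F)` is not of this kind, being commutative for `n = 1` and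
containing nonzero nilpotents for `n ≥ 2`. -/

section QuadraticForms

variable {F : Type*} [Field F]

theorem binQF_apply (A B : F) (v : Fin 2 → F) :
    binQF F A B v = A * v 0 ^ 2 + v 0 * v 1 + B * v 1 ^ 2 := by
  simp [binQF, pow_two]

theorem sq_prod_binQF_apply (A B x y z : F) :
    (QuadraticMap.sq.prod (binQF F A B)) (x, ![y, z]) = x ^ 2 + A * y ^ 2 + y * z + B * z ^ 2 := by
  simp [binQF_apply, pow_two, add_assoc]

theorem eq_zero_of_sq_prod_binQF_eq_zero {A B : F}
    (hT : (QuadraticMap.sq.prod (binQF F A B)).Anisotropic) {x y z : F}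
    (h : x ^ 2 + A * y ^ 2 + y * z + B * z ^ 2 = 0) : x = 0 ∧ y = 0 ∧ z = 0 := by
  have := hT (x, ![y, z]) (by rw [sq_prod_binQF_apply, h])
  simpa [Prod.ext_iff, funext_iff, Fin.forall_fin_two] using this

theorem anisotropic_sq_prod_binQF_mul_inv {d a b : F}
    (h : ((d • QuadraticMap.sq).prod (binQF F a b)).Anisotropic) :
    (QuadraticMap.sq.prod (binQF F (d * a) (d⁻¹ * b))).Anisotropic := by
  have hd : d ≠ 0 := by
    rintro rfl
    simpa using h (1, 0) (by simp)
  rintro ⟨x, v⟩ hxv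
  rw [show v = ![v 0, v 1] from funext (Fin.forall_fin_two.2 ⟨rfl, rfl⟩),
    sq_prod_binQF_apply] at hxv
  have := h (d⁻¹ * x, ![v 0, d⁻¹ * v 1]) (by
    simp only [QuadraticMap.prod_apply, smul_apply, QuadraticMap.sq_apply,
      binQF_apply, smul_eq_mul, Matrix.cons_val_zero, Matrix.cons_val_one]
    linear_combination d⁻¹ * hxv + (d⁻¹ * x ^ 2 - a * v 0 ^ 2) * mul_inv_cancel₀ hd)
  simpa [Prod.ext_iff, funext_iff, Fin.forall_fin_two, hd] using this

end QuadraticForms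

/-- The reduced norm of `c₀ + c₁ i + c₂ j + c₃ ij` in `{A, B}`, in characteristic `2`. -/
def quatNorm {R : Type*} [CommRing R] (A B c₀ c₁ c₂ c₃ : R) : R :=
  c₀ ^ 2 + c₀ * c₃ + A * c₁ ^ 2 + c₁ * c₂ + B * c₂ ^ 2 + A * B * c₃ ^ 2

theorem eq_zero_of_quatNorm_eq_zero {F : Type*} [Field F] [CharP F 2] {A B : F}
    (hT : (QuadraticMap.sq.prod (binQF F A B)).Anisotropic) {c₀ c₁ c₂ c₃ : F}
    (hN : quatNorm A B c₀ c₁ c₂ c₃ = 0) : c₀ = 0 ∧ c₁ = 0 ∧ c₂ = 0 ∧ c₃ = 0 := by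
  -- `N((c₂ + c₃ i) x) = N(c₂ + c₃ i) N(x)`, and `(c₂ + c₃ i) x` has no `ij`-component.
  have hmul : (c₀ * c₂ + A * c₁ * c₃) ^ 2 + A * (c₁ * c₂ + c₀ * c₃) ^ 2
      + (c₁ * c₂ + c₀ * c₃) * (c₂ ^ 2 + A * c₃ ^ 2) + B * (c₂ ^ 2 + A * c₃ ^ 2) ^ 2
      = (c₂ ^ 2 + A * c₃ ^ 2) * quatNorm A B c₀ c₁ c₂ c₃ := by
    unfold quatNorm
    linear_combination 2 * A * c₀ * c₁ * c₂ * c₃ * CharTwo.two_eq_zero (R := F)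
  obtain ⟨-, -, hw⟩ := eq_zero_of_sq_prod_binQF_eq_zero hT (by rw [hmul, hN, mul_zero])
  obtain ⟨rfl, rfl, -⟩ := eq_zero_of_sq_prod_binQF_eq_zero hT (x := c₂) (y := c₃) (z := 0)
    (by linear_combination hw)
  obtain ⟨rfl, rfl, -⟩ := eq_zero_of_sq_prod_binQF_eq_zero hT (x := c₀) (y := c₁) (z := 0)
    (by unfold quatNorm at hN; linear_combination hN)
  exact ⟨rfl, rfl, rfl, rfl⟩

structure IsQuaternionBasis {R Q : Type*} [CommRing R] [Ring Q] [Algebra R Q]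
    (A B : R) (i j : Q) : Prop where
  mul_self_i : i * i = A • 1
  mul_self_j : j * j = B • 1
  mul_add_mul_swap : i * j + j * i = 1

def quatMk {R Q : Type*} [CommRing R] [Ring Q] [Algebra R Q] (i j : Q) (c₀ c₁ c₂ c₃ : R) : Q :=
  c₀ • 1 + c₁ • i + c₂ • j + c₃ • (i * j)

namespace IsQuaternionBasis

variable {R Q : Type*} [CommRing R] [Ring Q] [Algebra R Q] {A B : R} {i j : Q}

theorem j_mul_i (h : IsQuaternionBasis A B i j) : j * i = 1 - i * j :=
  eq_sub_of_add_eq' h.mul_add_mul_swap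

theorem i_mul_ij (h : IsQuaternionBasis A B i j) : i * (i * j) = A • j := by
  rw [← mul_assoc, h.mul_self_i, smul_mul_assoc, one_mul]

theorem j_mul_ij (h : IsQuaternionBasis A B i j) : j * (i * j) = j - B • i := by
  rw [← mul_assoc, h.j_mul_i, sub_mul, one_mul, mul_assoc, h.mul_self_j, mul_smul_comm, mul_one]

theorem ij_mul_i (h : IsQuaternionBasis A B i j) : i * j * i = i - A • j := by
  rw [mul_assoc, h.j_mul_i, mul_sub, mul_one, ← mul_assoc, h.mul_self_i, smul_mul_assoc, one_mul]

theorem ij_mul_j (h : IsQuaternionBasis A B i j) : i * j * j = B • i := by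
  rw [mul_assoc, h.mul_self_j, mul_smul_comm, mul_one]

theorem ij_mul_ij (h : IsQuaternionBasis A B i j) : i * j * (i * j) = i * j - (A * B) • 1 := by
  rw [mul_assoc, h.j_mul_ij, mul_sub, mul_smul_comm, h.mul_self_i, smul_smul, mul_comm]

theorem mul_mem_span (h : IsQuaternionBasis A B i j) {x : Q}
    (hx : x ∈ Submodule.span R {1, i, j, i * j}) :
    x * i ∈ Submodule.span R {1, i, j, i * j} ∧ x * j ∈ Submodule.span R {1, i, j, i * j} := by
  set S := Submodule.span R {1, i, j, i * j}
  have h1 : (1 : Q) ∈ S := Submodule.subset_span (by simp)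
  have hi : i ∈ S := Submodule.subset_span (by simp)
  have hj : j ∈ S := Submodule.subset_span (by simp)
  have hij : i * j ∈ S := Submodule.subset_span (by simp)
  have hmap_i : S.map (LinearMap.mulRight R i) ≤ S := by
    refine (Submodule.map_span_le _ _ _).2 ?_
    simp only [Set.mem_insert_iff, Set.mem_singleton_iff, forall_eq_or_imp, forall_eq,
      LinearMap.mulRight_apply, one_mul, h.mul_self_i, h.j_mul_i, h.ij_mul_i]
    exact ⟨hi, S.smul_mem _ h1, S.sub_mem h1 hij, S.sub_mem hi (S.smul_mem _ hj)⟩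
  have hmap_j : S.map (LinearMap.mulRight R j) ≤ S := by
    refine (Submodule.map_span_le _ _ _).2 ?_
    simp only [Set.mem_insert_iff, Set.mem_singleton_iff, forall_eq_or_imp, forall_eq,
      LinearMap.mulRight_apply, one_mul, h.mul_self_j, h.ij_mul_j]
    exact ⟨hj, hij, S.smul_mem _ h1, S.smul_mem _ hi⟩
  exact ⟨hmap_i ⟨x, hx, rfl⟩, hmap_j ⟨x, hx, rfl⟩⟩

-- In characteristic `2` the conjugate of `x = c₀ + c₁ i + c₂ j + c₃ ij` is `x + c₃`.
theorem mul_conj [CharP R 2] (h : IsQuaternionBasis A B i j) (c₀ c₁ c₂ c₃ : R) :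
    quatMk i j c₀ c₁ c₂ c₃ * quatMk i j (c₀ + c₃) c₁ c₂ c₃ = quatNorm A B c₀ c₁ c₂ c₃ • 1 := by
  simp only [quatMk, quatNorm, add_mul, mul_add, smul_mul_assoc, mul_smul_comm, one_mul, mul_one,
    h.mul_self_i, h.mul_self_j, h.j_mul_i, h.i_mul_ij, h.j_mul_ij, h.ij_mul_i, h.ij_mul_j,
    h.ij_mul_ij, smul_sub, smul_add, smul_smul]
  match_scalars <;> grind

theorem conj_mul [CharP R 2] (h : IsQuaternionBasis A B i j) (c₀ c₁ c₂ c₃ : R) :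
    quatMk i j (c₀ + c₃) c₁ c₂ c₃ * quatMk i j c₀ c₁ c₂ c₃ = quatNorm A B c₀ c₁ c₂ c₃ • 1 := by
  simp only [quatMk, quatNorm, add_mul, mul_add, smul_mul_assoc, mul_smul_comm, one_mul, mul_one,
    h.mul_self_i, h.mul_self_j, h.j_mul_i, h.i_mul_ij, h.j_mul_ij, h.ij_mul_i, h.ij_mul_j,
    h.ij_mul_ij, smul_sub, smul_add, smul_smul]
  match_scalars <;> grind

theorem map {Q' : Type*} [Ring Q'] [Algebra R Q'] (h : IsQuaternionBasis A B i j)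
    (f : Q →ₐ[R] Q') : IsQuaternionBasis A B (f i) (f j) where
  mul_self_i := by rw [← map_mul, h.mul_self_i, map_smul, map_one]
  mul_self_j := by rw [← map_mul, h.mul_self_j, map_smul, map_one]
  mul_add_mul_swap := by rw [← map_mul, ← map_mul, ← map_add, h.mul_add_mul_swap, map_one]

theorem not_commute [CharP R 2] [Nontrivial Q] (h : IsQuaternionBasis A B i j) :
    ¬ Commute i j := by
  intro hij
  apply one_ne_zero (α := Q)
  rw [← h.mul_add_mul_swap, hij.eq, ← two_smul R, CharTwo.two_eq_zero, zero_smul]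

theorem isUnit_quatMk {F : Type*} [Field F] [CharP F 2] [Algebra F Q] {A B : F}
    (h : IsQuaternionBasis A B i j) {c₀ c₁ c₂ c₃ : F} (hN : quatNorm A B c₀ c₁ c₂ c₃ ≠ 0) :
    IsUnit (quatMk i j c₀ c₁ c₂ c₃) := by
  refine ⟨⟨quatMk i j c₀ c₁ c₂ c₃,
    (quatNorm A B c₀ c₁ c₂ c₃)⁻¹ • quatMk i j (c₀ + c₃) c₁ c₂ c₃, ?_, ?_⟩, rfl⟩
  · rw [mul_smul_comm, h.mul_conj, smul_smul, inv_mul_cancel₀ hN, one_smul]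
  · rw [smul_mul_assoc, h.conj_mul, smul_smul, inv_mul_cancel₀ hN, one_smul]

end IsQuaternionBasis

theorem exists_eq_quatMk_of_mem_span {R Q : Type*} [CommRing R] [Ring Q] [Algebra R Q]
    {i j x : Q} (hx : x ∈ Submodule.span R {1, i, j, i * j}) :
    ∃ c₀ c₁ c₂ c₃ : R, x = quatMk i j c₀ c₁ c₂ c₃ := by
  simp only [Submodule.mem_span_insert, Submodule.mem_span_singleton] at hx
  obtain ⟨c₀, _, ⟨c₁, _, ⟨c₂, _, ⟨c₃, rfl⟩, rfl⟩, rfl⟩, rfl⟩ := hx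
  exact ⟨c₀, c₁, c₂, c₃, by simp only [quatMk, add_assoc]⟩

theorem Matrix.exists_ne_zero_not_isUnit {K ι : Type*} [Semiring K] [Nontrivial K] [Fintype ι]
    [DecidableEq ι] {p q : ι} (hpq : p ≠ q) : ∃ M : Matrix ι ι K, M ≠ 0 ∧ ¬ IsUnit M := by
  have hM : Matrix.single p q (1 : K) ≠ 0 := fun h0 => by simpa using congrFun (congrFun h0 p) q
  exact ⟨_, hM, fun hu =>
    hM (hu.mul_left_eq_zero.1 (Matrix.single_mul_single_of_ne 1 p q p hpq.symm 1))⟩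

theorem IsQuaternionBasis.not_isSplitAlgebra {F Q : Type*} [Field F] [CharP F 2] [Ring Q]
    [Algebra F Q] {A B : F} {i j : Q} (h : IsQuaternionBasis A B i j)
    (hdiv : ∀ x : Q, x ≠ 0 → IsUnit x) : ¬ IsSplitAlgebra F Q := by
  rintro ⟨n, hn, ⟨e⟩⟩
  obtain rfl | hn2 : n = 1 ∨ 2 ≤ n := by omega
  · refine (h.map e.toAlgHom).not_commute ?_
    ext a b
    fin_cases a; fin_cases b
    simp [Matrix.mul_apply, mul_comm]
  · have h01 : (⟨0, hn⟩ : Fin n) ≠ ⟨1, hn2⟩ := by simp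
    obtain ⟨M, hM0, hM⟩ := Matrix.exists_ne_zero_not_isUnit (K := F) h01
    exact hM (by simpa using (hdiv (e.symm M) (by simpa using hM0)).map e)

namespace CliffordAlgebra

variable {F : Type*} [Field F]

theorem isQuaternionBasis_ι_binQF (A B : F) :
    IsQuaternionBasis A B (ι (binQF F A B) ![1, 0]) (ι (binQF F A B) ![0, 1]) where
  mul_self_i := by rw [ι_sq_scalar, Algebra.algebraMap_eq_smul_one, binQF_apply]; simp
  mul_self_j := by rw [ι_sq_scalar, Algebra.algebraMap_eq_smul_one, binQF_apply]; simp
  mul_add_mul_swap := by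
    have : QuadraticMap.polar (binQF F A B) ![1, 0] ![0, 1] = 1 := by
      simp [QuadraticMap.polar, binQF_apply]; ring
    rw [ι_mul_ι_add_swap, this, map_one]

theorem mem_span_ι_binQF {A B : F} (x : CliffordAlgebra (binQF F A B)) :
    x ∈ Submodule.span F
      {1, ι _ ![1, 0], ι _ ![0, 1], ι (binQF F A B) ![1, 0] * ι (binQF F A B) ![0, 1]} := by
  induction x using CliffordAlgebra.right_induction with
  | algebraMap r =>
    rw [Algebra.algebraMap_eq_smul_one]
    exact Submodule.smul_mem _ _ (Submodule.subset_span (by simp))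
  | add x y hx hy => exact Submodule.add_mem _ hx hy
  | mul_ι v x hx =>
    obtain ⟨hxi, hxj⟩ := (isQuaternionBasis_ι_binQF A B).mul_mem_span hx
    rw [show v = v 0 • ![1, 0] + v 1 • ![0, 1] by ext k; fin_cases k <;> simp,
      map_add, map_smul, map_smul, mul_add, mul_smul_comm, mul_smul_comm]
    exact Submodule.add_mem _ (Submodule.smul_mem _ _ hxi) (Submodule.smul_mem _ _ hxj)

theorem isUnit_of_anisotropic [CharP F 2] {A B : F}
    (hT : (QuadraticMap.sq.prod (binQF F A B)).Anisotropic) {x : CliffordAlgebra (binQF F A B)}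
    (hx : x ≠ 0) : IsUnit x := by
  obtain ⟨c₀, c₁, c₂, c₃, rfl⟩ := exists_eq_quatMk_of_mem_span (mem_span_ι_binQF x)
  refine (isQuaternionBasis_ι_binQF A B).isUnit_quatMk fun hN => hx ?_
  obtain ⟨rfl, rfl, rfl, rfl⟩ := eq_zero_of_quatNorm_eq_zero hT hN
  simp [quatMk]

end CliffordAlgebra

theorem stmt_7_general {Fq : Type} [Field Fq] [CharP Fq 2]
    (d a b : LaurentSeries Fq)
    (hani : (QuadraticMap.prod (d • QuadraticMap.sq) (binQF (LaurentSeries Fq) a b)).Anisotropic) :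
    (∀ x : CliffordAlgebra (binQF (LaurentSeries Fq) (d * a) (d⁻¹ * b)), x ≠ 0 → IsUnit x) ∧
      ¬ IsSplitAlgebra (LaurentSeries Fq) (CliffordAlgebra (binQF (LaurentSeries Fq) (d * a) (d⁻¹ * b))) := by
  have : CharP (LaurentSeries Fq) 2 :=
    charP_of_injective_algebraMap (algebraMap Fq (LaurentSeries Fq)).injective 2
  have hdiv (x) (hx : x ≠ 0) :=
    CliffordAlgebra.isUnit_of_anisotropic (anisotropic_sq_prod_binQF_mul_inv hani) (x := x) hx
  exact ⟨hdiv, (CliffordAlgebra.isQuaternionBasis_ι_binQF _ _).not_isSplitAlgebra hdiv⟩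

/-- over a non-archimedean local field of characteristic 2, if the rank-3
form `⟨d⟩ ⊥ [a,b]` is anisotropic, then the quaternion algebra `{da, d⁻¹b / F}`
(realized as the Clifford algebra of the binary form `[da, d⁻¹b]`) is a division algebra;
in particular it is not split. -/
theorem stmt_7 {Fq : Type} [Field Fq] [Fintype Fq] [CharP Fq 2]
    (d a b : LaurentSeries Fq) (hd : d ≠ 0)
    (hani : (QuadraticMap.prod (d • QuadraticMap.sq) (binQF (LaurentSeries Fq) a b)).Anisotropic) :
    (∀ x : CliffordAlgebra (binQF (LaurentSeries Fq) (d * a) (d⁻¹ * b)), x ≠ 0 → IsUnit x) ∧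
      ¬ IsSplitAlgebra (LaurentSeries Fq) (CliffordAlgebra (binQF (LaurentSeries Fq) (d * a) (d⁻¹ * b))) :=
  stmt_7_general d a b hani
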